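/- For all integers j and k with 0 ≤ k ≤ j and every real number x, the falling factorial satisfies (x−k)_{j−k} = Σ_{v=0}^{j−k} (−1)^v P⁰_{j,v}(k) x^{j−k−v}, where (y)_i = y(y−1)⋯(y−i+1) and (y)_0 = 1. -/
import Mathlib


/-- `P0 k m j` is the rational number `P⁰_{k,m}(j)` defined by `P⁰_{k,0}(j) = 1` and
`P⁰_{k,m}(j) = Σ_{q=j}^{k−m} q·P⁰_{k,m−1}(q+1)` for `m ≥ 1` (empty sums are `0`). -/
def P0 (k : ℕ) : ℕ → ℕ → ℚ
  | 0, _ => 1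
  | m + 1, j => ∑ q ∈ Finset.Icc j (k - (m + 1)), (q : ℚ) * P0 k m (q + 1)

lemma P0_rec (j v k : ℕ) (h : k + v < j) :
    P0 j (v+1) k = k * P0 j v (k+1) + P0 j (v+1) (k+1) := by
  show (∑ q ∈ Finset.Icc k (j - (v+1)), (q : ℚ) * P0 j v (q+1)) = _
  rw [show Finset.Icc k (j - (v+1)) = insert k (Finset.Icc (k+1) (j-(v+1))) by
    ext q; simp [Finset.mem_Icc]; omega]
  rw [Finset.sum_insert (by simp)]
  rfl

lemma P0_zero (j m k : ℕ) (hk : 1 ≤ k) (h : j < k + m + 1) : P0 j (m+1) k = 0 := by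
  show (∑ q ∈ Finset.Icc k (j - (m+1)), (q : ℚ) * P0 j m (q+1)) = 0
  rw [Finset.Icc_eq_empty (by omega)]
  simp

lemma main_aux (j : ℕ) : ∀ d k, k + d = j → ∀ x : ℝ,
    ∏ i ∈ Finset.range d, (x - (k : ℝ) - (i : ℝ)) =
      ∑ v ∈ Finset.range (d + 1),
        (-1 : ℝ) ^ v * ((P0 j v k : ℚ) : ℝ) * x ^ (d - v) := by
  intro d
  induction d with
  | zero => intro k hk x; simp [P0]
  | succ d ih =>
    intro k hk x
    rw [Finset.prod_range_succ']
    have h1 : ∀ i : ℕ, x - (k : ℝ) - ((i : ℕ) + 1 : ℕ) = x - ((k+1 : ℕ) : ℝ) - (i : ℝ) := by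
      intro i; push_cast; ring
    simp only [h1]
    rw [ih (k+1) (by omega)]
    set A : ℕ → ℝ := fun v => ((P0 j v (k+1) : ℚ) : ℝ) with hA
    rw [Finset.sum_range_succ' (fun v => (-1 : ℝ) ^ v * ((P0 j v k : ℚ) : ℝ) * x ^ (d + 1 - v))]
    have hB : ∀ v ∈ Finset.range (d+1),
        (-1:ℝ)^(v+1) * ((P0 j (v+1) k : ℚ):ℝ) * x ^ (d+1-(v+1)) =
        (-1:ℝ)^(v+1) * ((k:ℝ) * A v + A (v+1)) * x ^ (d-v) := by
      intro v hv
      rw [Finset.mem_range] at hv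
      rw [P0_rec j v k (by omega), Nat.succ_sub_succ]
      simp only [hA]
      push_cast
      ring
    rw [Finset.sum_congr rfl hB]
    have hcast : ((0:ℕ):ℝ) = 0 := by norm_num
    rw [hcast, sub_zero]
    have expand : (∑ v ∈ Finset.range (d+1), (-1:ℝ)^v * A v * x ^ (d-v)) * (x - (k:ℝ)) =
        (∑ v ∈ Finset.range (d+1), (-1:ℝ)^v * A v * x ^ (d-v) * x)
        + ∑ v ∈ Finset.range (d+1), (-1:ℝ)^(v+1) * ((k:ℝ) * A v) * x ^ (d-v) := by
      rw [← Finset.sum_add_distrib, Finset.sum_mul]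
      apply Finset.sum_congr rfl; intro v hv; ring
    rw [expand]
    have step1 : (∑ v ∈ Finset.range (d+1), (-1:ℝ)^v * A v * x ^ (d-v) * x) =
        (∑ v ∈ Finset.range (d+1), (-1:ℝ)^(v+1) * A (v+1) * x ^ (d-v)) + A 0 * x ^ (d+1) := by
      have e1 : ∀ v ∈ Finset.range (d+1),
          (-1:ℝ)^v * A v * x ^ (d-v) * x = (-1:ℝ)^v * A v * x ^ (d+1-v) := by
        intro v hv; rw [Finset.mem_range] at hv
        rw [show d+1-v = (d-v)+1 by omega, pow_succ]; ring
      rw [Finset.sum_congr rfl e1]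
      have e2 := Finset.sum_range_succ' (fun v => (-1:ℝ)^v * A v * x ^ (d+1-v)) (d+1)
      have e3 := Finset.sum_range_succ (fun v => (-1:ℝ)^v * A v * x ^ (d+1-v)) (d+1)
      have hAz : A (d+1) = 0 := by
        simp only [hA]
        rw [P0_zero j d (k+1) (by omega) (by omega)]; norm_num
      rw [hAz] at e3
      simp only [mul_zero, zero_mul, add_zero] at e3
      rw [← e3, e2]
      simp only [Nat.succ_sub_succ, Nat.sub_zero, pow_zero, one_mul]
    rw [step1]
    have hA0 : A 0 = 1 := by simp only [hA]; simp [P0]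
    have hB0 : ((P0 j 0 k : ℚ) : ℝ) = 1 := by simp [P0]
    rw [hA0, hB0]
    have key : (∑ v ∈ Finset.range (d+1), (-1:ℝ)^(v+1) * A (v+1) * x^(d-v))
        + (∑ v ∈ Finset.range (d+1), (-1:ℝ)^(v+1) * ((k:ℝ) * A v) * x^(d-v))
        = ∑ v ∈ Finset.range (d+1), (-1:ℝ)^(v+1) * ((k:ℝ)*A v + A (v+1)) * x^(d-v) := by
      rw [← Finset.sum_add_distrib]; apply Finset.sum_congr rfl; intro v hv; ring
    simp only [Nat.sub_zero, pow_zero, one_mul, mul_one]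
    linarith [key]

/-- For all integers `j` and `k` with `0 ≤ k ≤ j` and every real
number `x`, the falling factorial `(y)_i = y(y−1)⋯(y−i+1)` (with `(y)_0 = 1`)
satisfies `(x−k)_{j−k} = Σ_{v=0}^{j−k} (−1)^v P⁰_{j,v}(k) x^{j−k−v}`. -/
theorem fallingFactorial_shift_expansion (j k : ℕ) (hkj : k ≤ j) (x : ℝ) :
    ∏ i ∈ Finset.range (j - k), (x - (k : ℝ) - (i : ℝ)) =
      ∑ v ∈ Finset.range (j - k + 1),
        (-1 : ℝ) ^ v * ((P0 j v k : ℚ) : ℝ) * x ^ (j - k - v) := by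
  exact main_aux j (j - k) k (by omega) x
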